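/- Let p be a central idempotent in a sequential effect algebra E (p commutes with every element). Then E is isomorphic, as a sequential effect algebra, to the direct sum (p ∘ E) ⊕ (p⊥ ∘ E), via the map a ↦ (p ∘ a, p⊥ ∘ a). -/
import Mathlib


universe u

/-- `EAle orth add a b` : the effect-algebra order `a ≤ b` iff `∃ c, a ⊕ c = b`. -/
def EAle {α : Type u} (orth : α → α → Prop) (add : α → α → α) (a b : α) : Prop :=
  ∃ c, orth a c ∧ add a c = b

/-- An effect algebra: partial sum `add` (defined when `orth` holds), zero, complement. -/
structure EffectAlgebra (α : Type u) where
  orth : α → α → Prop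
  add : α → α → α
  zero : α
  compl : α → α
  orth_comm : ∀ a b, orth a b → orth b a
  add_comm' : ∀ a b, orth a b → add a b = add b a
  orth_zero : ∀ a, orth a zero
  add_zero' : ∀ a, add a zero = a
  orth_assoc₁ : ∀ a b c, orth a b → orth (add a b) c → orth b c
  orth_assoc₂ : ∀ a b c, orth a b → orth (add a b) c → orth a (add b c)
  add_assoc' : ∀ a b c, orth a b → orth (add a b) c → add (add a b) c = add a (add b c)
  orth_compl : ∀ a, orth a (compl a)
  add_compl : ∀ a, add a (compl a) = compl zero
  compl_unique : ∀ a b, orth a b → add a b = compl zero → b = compl a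
  orth_one : ∀ a, orth a (compl zero) → a = zero

namespace EffectAlgebra
variable {α : Type u}
/-- The effect-algebra order. -/
def le (E : EffectAlgebra α) : α → α → Prop := EAle E.orth E.add
/-- The unit `1 := 0⊥`. -/
def one (E : EffectAlgebra α) : α := E.compl E.zero
end EffectAlgebra

/-- A sequential effect algebra: an effect algebra with a total product `seq`
satisfying S1–S5. -/
structure SEA (α : Type u) extends EffectAlgebra α where
  seq : α → α → α
  seq_orth : ∀ a b c, orth b c → orth (seq a b) (seq a c)                                -- S1
  seq_add : ∀ a b c, orth b c → seq a (add b c) = add (seq a b) (seq a c)                -- S1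
  one_seq : ∀ a, seq (compl zero) a = a                                                  -- S2
  seq_zero_symm : ∀ a b, seq a b = zero → seq b a = zero                                 -- S3
  comm_compl : ∀ a b, seq a b = seq b a → seq a (compl b) = seq (compl b) a              -- S4
  comm_assoc : ∀ a b c, seq a b = seq b a → seq a (seq b c) = seq (seq a b) c            -- S4
  comm_seq : ∀ a b c, seq c a = seq a c → seq c b = seq b c →
    seq c (seq a b) = seq (seq a b) c                                                    -- S5
  comm_add : ∀ a b c, seq c a = seq a c → seq c b = seq b c → orth a b →
    seq c (add a b) = seq (add a b) c                                                    -- S5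

namespace EffectAlgebra
variable {α : Type u} (E : EffectAlgebra α)

lemma orth_zero' (a : α) : E.orth E.zero a := E.orth_comm _ _ (E.orth_zero a)

lemma zero_add' (a : α) : E.add E.zero a = a := by
  rw [E.add_comm' _ _ (E.orth_zero' a), E.add_zero']

lemma compl_add (a : α) : E.add (E.compl a) a = E.compl E.zero := by
  rw [E.add_comm' _ _ (E.orth_comm _ _ (E.orth_compl a)), E.add_compl]

lemma compl_compl' (a : α) : E.compl (E.compl a) = a :=
  (E.compl_unique (E.compl a) a (E.orth_comm _ _ (E.orth_compl a)) (E.compl_add a)).symm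

lemma cancel {a b c : α} (hab : E.orth a b) (hac : E.orth a c)
    (h : E.add a b = E.add a c) : b = c := by
  have helper : ∀ x, E.orth a x → E.add a x = E.add a b →
      E.add (E.compl (E.add a b)) a = E.compl x := by
    intro x hax hx
    have h1 : E.orth (E.add a x) (E.compl (E.add a b)) := by
      rw [hx]; exact E.orth_compl _
    have hxe : E.orth x (E.compl (E.add a b)) := E.orth_assoc₁ a x _ hax h1
    have hax2 : E.orth a (E.add x (E.compl (E.add a b))) := E.orth_assoc₂ a x _ hax h1
    have hsum2 : E.add a (E.add x (E.compl (E.add a b))) = E.compl E.zero := by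
      rw [← E.add_assoc' a x _ hax h1, hx, E.add_compl]
    have hxe1 : E.add x (E.compl (E.add a b)) = E.compl a :=
      E.compl_unique a _ hax2 hsum2
    have h2 : E.orth (E.add x (E.compl (E.add a b))) a := E.orth_comm _ _ hax2
    have hea : E.orth (E.compl (E.add a b)) a := E.orth_assoc₁ x _ a hxe h2
    have hx2 : E.orth x (E.add (E.compl (E.add a b)) a) := E.orth_assoc₂ x _ a hxe h2
    have hsum3 : E.add x (E.add (E.compl (E.add a b)) a) = E.compl E.zero := by
      rw [← E.add_assoc' x _ a hxe h2, hxe1, E.compl_add]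
    exact E.compl_unique x _ hx2 hsum3
  have hb := helper b hab rfl
  have hcc := helper c hac h.symm
  have : E.compl b = E.compl c := hb.symm.trans hcc
  rw [← E.compl_compl' b, this, E.compl_compl']

lemma eq_zero_of_add {a b : α} (hab : E.orth a b) (h : E.add a b = E.zero) :
    a = E.zero ∧ b = E.zero := by
  have h1 : E.orth (E.add a b) (E.compl E.zero) := by
    rw [h]; exact E.orth_zero' _
  have hb : b = E.zero := E.orth_one b (E.orth_assoc₁ a b _ hab h1)
  rw [hb, E.add_zero'] at h
  exact ⟨h, hb⟩

lemma assoc_left {a b c : α} (hbc : E.orth b c) (h : E.orth a (E.add b c)) :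
    E.orth a b ∧ E.orth (E.add a b) c ∧ E.orth a c := by
  have h' : E.orth (E.add b c) a := E.orth_comm _ _ h
  have hca : E.orth c a := E.orth_assoc₁ b c a hbc h'
  have hb : E.orth b (E.add c a) := E.orth_assoc₂ b c a hbc h'
  have hb' : E.orth (E.add c a) b := E.orth_comm _ _ hb
  have hab : E.orth a b := E.orth_assoc₁ c a b hca hb'
  have h2 : E.orth c (E.add a b) := E.orth_assoc₂ c a b hca hb'
  exact ⟨hab, E.orth_comm _ _ h2, E.orth_comm _ _ hca⟩

lemma exchange {a b c d : α} (hab : E.orth a b) (hcd : E.orth c d)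
    (h : E.orth (E.add a b) (E.add c d)) : E.orth (E.add a c) (E.add b d) := by
  obtain ⟨h1, h2, -⟩ := E.assoc_left hcd h
  -- h1 : orth (a⊕b) c, h2 : orth ((a⊕b)⊕c) d
  have hbc : E.orth b c := E.orth_assoc₁ a b c hab h1
  have habc : E.orth a (E.add b c) := E.orth_assoc₂ a b c hab h1
  have eq1 : E.add (E.add a b) c = E.add a (E.add b c) := E.add_assoc' a b c hab h1
  have habc' : E.orth a (E.add c b) := by
    rwa [E.add_comm' b c hbc] at habc
  obtain ⟨hac, hacb, -⟩ := E.assoc_left (E.orth_comm _ _ hbc) habc'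
  have eq2 : E.add (E.add a b) c = E.add (E.add a c) b := by
    rw [eq1, E.add_comm' b c hbc, E.add_assoc' a c b hac hacb]
  rw [eq2] at h2
  exact E.orth_assoc₂ _ b d hacb h2

lemma orth_of_le_le_compl {p x y : α} (hx : E.le x p) (hy : E.le y (E.compl p)) :
    E.orth x y := by
  obtain ⟨c, hxc, hcx⟩ := hx
  obtain ⟨d, hyd, hdy⟩ := hy
  have h0 : E.orth (E.add x c) (E.add y d) := by
    rw [hcx, hdy]; exact E.orth_compl p
  have h1 : E.orth x (E.add c (E.add y d)) := E.orth_assoc₂ x c _ hxc h0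
  have hc' : E.orth c (E.add y d) := E.orth_assoc₁ x c _ hxc h0
  rw [E.add_comm' c _ hc'] at h1
  have h2 : E.orth x (E.add y d) := (E.assoc_left (E.orth_comm _ _ hc') h1).1
  exact (E.assoc_left hyd h2).1

end EffectAlgebra

namespace SEA
variable {α : Type u} (E : SEA α)

lemma seq_zero' (a : α) : E.seq a E.zero = E.zero := by
  have h1 : E.orth (E.compl E.zero) E.zero := E.orth_zero _
  have h2 := E.seq_add a _ _ h1
  rw [E.add_zero'] at h2
  exact E.toEffectAlgebra.cancel (E.seq_orth a _ _ h1) (E.orth_zero _)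
    (h2.symm.trans (E.add_zero' _).symm)

lemma zero_seq (a : α) : E.seq E.zero a = E.zero := E.seq_zero_symm a E.zero (E.seq_zero' a)

lemma seq_one' (a : α) : E.seq a (E.compl E.zero) = a := by
  have h := E.comm_compl a E.zero (by rw [E.seq_zero', E.zero_seq])
  rwa [E.one_seq] at h

end SEA
/-- A central idempotent `p` splits a SEA as the direct sum of its two corners,
via `a ↦ (p ∘ a, p⊥ ∘ a)`: this map is a bijection of `E` onto
`{x : x ≤ p} × {x : x ≤ p⊥}` which preserves (and reflects) summability, sums,
the sequential product, and the unit, i.e. it is an isomorphism of sequential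
effect algebras onto the componentwise direct sum. -/
theorem sea_central_idem_split {α : Type u} (E : SEA α) (p : α)
    (hp : E.seq p p = p) (hc : ∀ a, E.seq p a = E.seq a p) :
    Set.BijOn (fun a => (E.seq p a, E.seq (E.compl p) a)) Set.univ
      ({x | E.le x p} ×ˢ {x | E.le x (E.compl p)}) ∧
    (∀ a b, E.orth a b ↔
      (E.orth (E.seq p a) (E.seq p b) ∧
       E.orth (E.seq (E.compl p) a) (E.seq (E.compl p) b))) ∧
    (∀ a b, E.orth a b →
      E.seq p (E.add a b) = E.add (E.seq p a) (E.seq p b) ∧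
      E.seq (E.compl p) (E.add a b)
        = E.add (E.seq (E.compl p) a) (E.seq (E.compl p) b)) ∧
    (∀ a b, E.seq p (E.seq a b) = E.seq (E.seq p a) (E.seq p b) ∧
      E.seq (E.compl p) (E.seq a b)
        = E.seq (E.seq (E.compl p) a) (E.seq (E.compl p) b)) ∧
    E.seq p E.one = p ∧ E.seq (E.compl p) E.one = E.compl p := by
  have hq_comm : ∀ a, E.seq (E.compl p) a = E.seq a (E.compl p) :=
    fun a => (E.comm_compl a p (hc a).symm).symm
  have hpq : E.orth p (E.compl p) := E.orth_compl p
  have hpq1 : E.add p (E.compl p) = E.compl E.zero := E.add_compl p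
  have hpq0 : E.seq p (E.compl p) = E.zero := by
    have h := E.seq_add p p (E.compl p) hpq
    rw [hpq1, E.seq_one', hp] at h
    have horth : E.orth p (E.seq p (E.compl p)) := by
      have := E.seq_orth p p (E.compl p) hpq; rwa [hp] at this
    exact E.toEffectAlgebra.cancel horth (E.orth_zero p)
      (h.symm.trans (E.add_zero' p).symm)
  have hqp0 : E.seq (E.compl p) p = E.zero := E.seq_zero_symm p (E.compl p) hpq0
  have hq_idem : E.seq (E.compl p) (E.compl p) = E.compl p := by
    have h := E.seq_add (E.compl p) p (E.compl p) hpq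
    rw [hpq1, E.seq_one', hqp0, E.toEffectAlgebra.zero_add'] at h
    exact h.symm
  have split_orth : ∀ a, E.orth (E.seq p a) (E.seq (E.compl p) a) := fun a => by
    have := E.seq_orth a p (E.compl p) hpq
    rwa [← hc a, ← hq_comm a] at this
  have split_add : ∀ a, E.add (E.seq p a) (E.seq (E.compl p) a) = a := fun a => by
    have h := E.seq_add a p (E.compl p) hpq
    rw [hpq1, E.seq_one', ← hc a, ← hq_comm a] at h
    exact h.symm
  have corner_le : ∀ r a, E.le (E.seq r a) r := fun r a =>
    ⟨E.seq r (E.compl a), E.seq_orth r a _ (E.orth_compl a), by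
      rw [← E.seq_add r a _ (E.orth_compl a), E.add_compl, E.seq_one']⟩
  have seq_q_zero : ∀ x, E.le x p → E.seq (E.compl p) x = E.zero := by
    rintro x ⟨c, hxc, hcx⟩
    have h := E.seq_add (E.compl p) x c hxc
    rw [hcx, hqp0] at h
    exact (E.toEffectAlgebra.eq_zero_of_add (E.seq_orth (E.compl p) x c hxc) h.symm).1
  have seq_p_eq : ∀ x, E.le x p → E.seq p x = x := fun x hx => by
    have h := split_add x
    rwa [seq_q_zero x hx, E.add_zero'] at h
  have seq_p_zero : ∀ y, E.le y (E.compl p) → E.seq p y = E.zero := by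
    rintro y ⟨d, hyd, hdy⟩
    have h := E.seq_add p y d hyd
    rw [hdy, hpq0] at h
    exact (E.toEffectAlgebra.eq_zero_of_add (E.seq_orth p y d hyd) h.symm).1
  have seq_q_eq : ∀ y, E.le y (E.compl p) → E.seq (E.compl p) y = y := fun y hy => by
    have h := split_add y
    rwa [seq_p_zero y hy, E.toEffectAlgebra.zero_add'] at h
  have seq_qp : ∀ a, E.seq (E.compl p) (E.seq p a) = E.zero := fun a => by
    have h := E.comm_assoc (E.compl p) p a (hq_comm p)
    rwa [hqp0, E.zero_seq] at h
  have seq_pq' : ∀ a, E.seq p (E.seq (E.compl p) a) = E.zero := fun a => by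
    have h := E.comm_assoc p (E.compl p) a (hc (E.compl p))
    rwa [hpq0, E.zero_seq] at h
  have mult_p : ∀ a b, E.seq p (E.seq a b) = E.seq (E.seq p a) (E.seq p b) := by
    intro a b
    have h1 : E.seq p (E.seq a b) = E.seq (E.seq p a) b := E.comm_assoc p a b (hc a)
    have h2 : E.seq (E.seq p a) b
        = E.add (E.seq (E.seq p a) (E.seq p b)) (E.seq (E.seq p a) (E.seq (E.compl p) b)) := by
      conv_lhs => rw [← split_add b]
      exact E.seq_add _ _ _ (split_orth b)
    have h3 : E.seq (E.seq p a) (E.seq (E.compl p) b) = E.zero := by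
      have h := E.comm_assoc (E.seq p a) (E.compl p) b (hq_comm (E.seq p a)).symm
      rwa [← hq_comm (E.seq p a), seq_qp a, E.zero_seq] at h
    rw [h3, E.add_zero'] at h2
    exact h1.trans h2
  have mult_q : ∀ a b, E.seq (E.compl p) (E.seq a b)
      = E.seq (E.seq (E.compl p) a) (E.seq (E.compl p) b) := by
    intro a b
    have h1 : E.seq (E.compl p) (E.seq a b) = E.seq (E.seq (E.compl p) a) b :=
      E.comm_assoc (E.compl p) a b (hq_comm a)
    have h2 : E.seq (E.seq (E.compl p) a) b
        = E.add (E.seq (E.seq (E.compl p) a) (E.seq p b))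
            (E.seq (E.seq (E.compl p) a) (E.seq (E.compl p) b)) := by
      conv_lhs => rw [← split_add b]
      exact E.seq_add _ _ _ (split_orth b)
    have h3 : E.seq (E.seq (E.compl p) a) (E.seq p b) = E.zero := by
      have h := E.comm_assoc (E.seq (E.compl p) a) p b (hc (E.seq (E.compl p) a)).symm
      rwa [← hc (E.seq (E.compl p) a), seq_pq' a, E.zero_seq] at h
    rw [h3, E.toEffectAlgebra.zero_add'] at h2
    exact h1.trans h2
  have corner_add_p : ∀ x y, E.le x p → E.le y p → E.orth x y → E.le (E.add x y) p := by
    intro x y hx hy hxy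
    have h : E.seq p (E.add x y) = E.add x y := by
      rw [E.seq_add p x y hxy, seq_p_eq x hx, seq_p_eq y hy]
    have := corner_le p (E.add x y)
    rwa [h] at this
  have corner_add_q : ∀ x y, E.le x (E.compl p) → E.le y (E.compl p) → E.orth x y →
      E.le (E.add x y) (E.compl p) := by
    intro x y hx hy hxy
    have h : E.seq (E.compl p) (E.add x y) = E.add x y := by
      rw [E.seq_add (E.compl p) x y hxy, seq_q_eq x hx, seq_q_eq y hy]
    have := corner_le (E.compl p) (E.add x y)
    rwa [h] at this
  have orth_back : ∀ a b, E.orth (E.seq p a) (E.seq p b) →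
      E.orth (E.seq (E.compl p) a) (E.seq (E.compl p) b) → E.orth a b := by
    intro a b h1 h2
    have hsp : E.le (E.add (E.seq p a) (E.seq p b)) p :=
      corner_add_p _ _ (corner_le p a) (corner_le p b) h1
    have hsq : E.le (E.add (E.seq (E.compl p) a) (E.seq (E.compl p) b)) (E.compl p) :=
      corner_add_q _ _ (corner_le (E.compl p) a) (corner_le (E.compl p) b) h2
    have h3 := E.toEffectAlgebra.orth_of_le_le_compl hsp hsq
    have h4 := E.toEffectAlgebra.exchange h1 h2 h3
    rwa [split_add a, split_add b] at h4
  refine ⟨⟨fun a _ => ⟨corner_le p a, corner_le (E.compl p) a⟩, ?_, ?_⟩, ?_, ?_, ?_, ?_, ?_⟩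
  · intro a _ b _ h
    have h1 : E.seq p a = E.seq p b := congrArg Prod.fst h
    have h2 : E.seq (E.compl p) a = E.seq (E.compl p) b := congrArg Prod.snd h
    rw [← split_add a, ← split_add b, h1, h2]
  · rintro ⟨x, y⟩ ⟨hx, hy⟩
    have hxy : E.orth x y := E.toEffectAlgebra.orth_of_le_le_compl hx hy
    have e1 : E.seq p (E.add x y) = x := by
      rw [E.seq_add p x y hxy, seq_p_eq x hx, seq_p_zero y hy, E.add_zero']
    have e2 : E.seq (E.compl p) (E.add x y) = y := by
      rw [E.seq_add (E.compl p) x y hxy, seq_q_zero x hx, seq_q_eq y hy,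
        E.toEffectAlgebra.zero_add']
    exact ⟨E.add x y, Set.mem_univ _, by
      show (E.seq p (E.add x y), E.seq (E.compl p) (E.add x y)) = (x, y)
      rw [e1, e2]⟩
  · exact fun a b => ⟨fun h => ⟨E.seq_orth p a b h, E.seq_orth (E.compl p) a b h⟩,
      fun ⟨h1, h2⟩ => orth_back a b h1 h2⟩
  · exact fun a b h => ⟨E.seq_add p a b h, E.seq_add (E.compl p) a b h⟩
  · exact fun a b => ⟨mult_p a b, mult_q a b⟩
  · exact E.seq_one' p
  · exact E.seq_one' (E.compl p)
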